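/- Let n ≥ 3, let U ⊆ ℝ^n be open and let f : U → ℝ^{n+2} be a parabolic smooth immersion. Then f has no flat points: for every x ∈ U there exist X, Y ∈ ℝ^n with ⟨α_f(x)(X,X), α_f(x)(Y,Y)⟩ − ‖α_f(x)(X,Y)‖² ≠ 0. -/

import Mathlib

noncomputable section

open scoped RealInnerProductSpace
open Module Set

/-- Euclidean space ℝ^k. -/
abbrev Euc (k : ℕ) : Type := EuclideanSpace ℝ (Fin k)

variable {E : Type*} [NormedAddCommGroup E] [NormedSpace ℝ E] {m : ℕ}

/-- Tangent space of an immersion at a point: range of the differential. -/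
def TangentSp (f : E → Euc m) (x : E) : Submodule ℝ (Euc m) :=
  LinearMap.range (fderiv ℝ f x).toLinearMap

/-- Normal space: orthogonal complement of the tangent space. -/
def NormalSp (f : E → Euc m) (x : E) : Submodule ℝ (Euc m) := (TangentSp f x)ᗮ

/-- Orthogonal projection of the ambient space onto the normal space. -/
def normalProj (f : E → Euc m) (x : E) : Euc m →L[ℝ] Euc m :=
  (NormalSp f x).subtypeL.comp (Submodule.orthogonalProjection (NormalSp f x))

/-- Orthogonal projection of the ambient space onto the tangent space. -/
def tangentProj (f : E → Euc m) (x : E) : Euc m →L[ℝ] Euc m :=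
  (TangentSp f x).subtypeL.comp (Submodule.orthogonalProjection (TangentSp f x))

/-- The second fundamental form as a continuous linear operator in the first variable,
with second argument `Y` fixed. -/
def sffOp (f : E → Euc m) (x : E) (Y : E) : E →L[ℝ] Euc m :=
  (normalProj f x).comp (fderiv ℝ (fun y => fderiv ℝ f y Y) x)

/-- The second fundamental form `α_f(x)(X,Y)`: normal component of the second derivative. -/
def sff (f : E → Euc m) (x : E) (X Y : E) : Euc m := sffOp f x Y X

/-- Relative nullity subspace `Δ_f(x) = {X : α_f(x)(X,Y)=0 for all Y}`. -/
def relNullity (f : E → Euc m) (x : E) : Submodule ℝ E :=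
  ⨅ Y : E, LinearMap.ker (sffOp f x Y).toLinearMap

/-- `f` is a smooth immersion on `U`. -/
def IsImmersionOn (f : E → Euc m) (U : Set E) : Prop :=
  ContDiffOn ℝ (⊤ : ℕ∞) f U ∧ ∀ x ∈ U, Function.Injective (fderiv ℝ f x)

/-- `f` and `g` induce the same metric on `U`. -/
def SameMetricOn {m' : ℕ} (f : E → Euc m) (g : E → Euc m') (U : Set E) : Prop :=
  ∀ x ∈ U, ∀ X Y : E,
    ⟪fderiv ℝ f x X, fderiv ℝ f x Y⟫ = ⟪fderiv ℝ g x X, fderiv ℝ g x Y⟫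

/-- First normal space: span of the values of the second fundamental form. -/
def FirstNormal (f : E → Euc m) (x : E) : Submodule ℝ (Euc m) :=
  Submodule.span ℝ {v | ∃ X Y : E, v = sff f x X Y}

/-- `f` has rank two: the relative nullity has codimension two everywhere on `U`. -/
def HasRankTwo (f : E → Euc m) (U : Set E) : Prop :=
  ∀ x ∈ U, finrank ℝ (relNullity f x) = finrank ℝ E - 2

/-- A parabolic submanifold: rank two, first normal space equal to the normal space,
and a nowhere-vanishing smooth asymptotic vector field orthogonal to the relative nullity. -/
def IsParabolic (f : E → Euc m) (U : Set E) : Prop :=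
  IsImmersionOn f U ∧ HasRankTwo f U ∧
  (∀ x ∈ U, FirstNormal f x = NormalSp f x) ∧
  ∃ Z : E → E, ContDiffOn ℝ (⊤ : ℕ∞) Z U ∧ (∀ x ∈ U, Z x ≠ 0) ∧
    (∀ x ∈ U, ∀ T ∈ relNullity f x, ⟪fderiv ℝ f x (Z x), fderiv ℝ f x T⟫ = 0) ∧
    (∀ x ∈ U, sff f x (Z x) (Z x) = 0)

/-- `F` is ruled on `V`: there is a smooth corank-one distribution whose leaves are
mapped into affine subspaces. -/
def IsRuledOn (F : E → Euc m) (V : Set E) : Prop :=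
  ∃ D : E → Submodule ℝ E,
    (∀ x ∈ V, finrank ℝ (D x) = finrank ℝ E - 1) ∧
    (∀ x ∈ V, ∃ W : Set E, IsOpen W ∧ x ∈ W ∧ W ⊆ V ∧
      ∃ v : Fin (finrank ℝ E - 1) → E → E,
        (∀ i, ContDiffOn ℝ (⊤ : ℕ∞) (v i) W) ∧
        ∀ y ∈ W, D y = Submodule.span ℝ (Set.range fun i => v i y)) ∧
    (∀ S T : E → E, ContDiffOn ℝ (⊤ : ℕ∞) S V → ContDiffOn ℝ (⊤ : ℕ∞) T V →
      (∀ y ∈ V, S y ∈ D y) → (∀ y ∈ V, T y ∈ D y) →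
      ∀ x ∈ V, fderiv ℝ (fun y => fderiv ℝ F y (T y)) x (S x) ∈
        (D x).map (fderiv ℝ F x).toLinearMap)

/-- A two-dimensional immersed surface contained in the subspace `W`. -/
def IsImmersedSurfaceIn (S : Set (Euc m)) (W : Submodule ℝ (Euc m)) : Prop :=
  ∃ (O : Set (Euc 2)) (σ : Euc 2 → Euc m), IsOpen O ∧ ContDiffOn ℝ (⊤ : ℕ∞) σ O ∧
    (∀ x ∈ O, Function.Injective (fderiv ℝ σ x)) ∧ (∀ x ∈ O, σ x ∈ W) ∧ S = σ '' O

/-- `f` is surface-like on `V`. -/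
def SurfaceLikeOn {n : ℕ} (f : Euc n → Euc m) (V : Set (Euc n)) : Prop :=
  (∃ (W : Submodule ℝ (Euc m)) (p : Euc m) (S : Set (Euc m)),
      finrank ℝ W = 4 ∧ IsImmersedSurfaceIn S W ∧
      ∀ x ∈ V, ∃ s ∈ S, ∃ w ∈ Wᗮ, f x = p + s + w)
  ∨ (∃ (W : Submodule ℝ (Euc m)) (p : Euc m) (S : Set (Euc m)),
      finrank ℝ W = 5 ∧ IsImmersedSurfaceIn S W ∧ (∀ s ∈ S, ‖s‖ = 1) ∧
      ∀ x ∈ V, ∃ t : ℝ, 0 < t ∧ ∃ s ∈ S, ∃ w ∈ Wᗮ, f x = p + t • s + w)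

/-- `f` and `g` are congruent on `U` by a rigid motion of the ambient space. -/
def CongruentOn {n : ℕ} (f g : Euc n → Euc m) (U : Set (Euc n)) : Prop :=
  ∃ (A : Euc m ≃ₗᵢ[ℝ] Euc m) (v : Euc m), ∀ x ∈ U, g x = A (f x) + v

/-!
At a flat point the Gauss equation gives `‖α(Z, Y)‖² = ⟨α(Z, Z), α(Y, Y)⟩ = 0` for an asymptotic
vector `Z`, so `Z` lies in the relative nullity. A parabolic asymptotic field is also orthogonal
to the relative nullity in the induced metric, hence it would vanish.
-/

theorem mem_relNullity_iff {f : E → Euc m} {x X : E} :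
    X ∈ relNullity f x ↔ ∀ Y, sff f x X Y = 0 := by
  simp only [relNullity, Submodule.mem_iInf, LinearMap.mem_ker, ContinuousLinearMap.coe_coe, sff]

/-- By the Gauss equation, the points where the induced metric has vanishing curvature. -/
def IsFlatPoint (f : E → Euc m) (x : E) : Prop :=
  ∀ X Y : E, ⟪sff f x X X, sff f x Y Y⟫ - ‖sff f x X Y‖ ^ 2 = 0

theorem IsFlatPoint.mem_relNullity {f : E → Euc m} {x X : E} (hx : IsFlatPoint f x)
    (hX : sff f x X X = 0) : X ∈ relNullity f x :=
  mem_relNullity_iff.2 fun Y => by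
    have h := hx X Y
    rwa [hX, inner_zero_left, zero_sub, neg_eq_zero, sq_eq_zero_iff, norm_eq_zero] at h

theorem eq_zero_of_mem_relNullity_of_forall_inner_eq_zero {f : E → Euc m} {x Z : E}
    (hinj : Function.Injective (fderiv ℝ f x)) (hZ : Z ∈ relNullity f x)
    (hperp : ∀ T ∈ relNullity f x, ⟪fderiv ℝ f x Z, fderiv ℝ f x T⟫ = 0) : Z = 0 :=
  hinj <| by rw [map_zero]; exact inner_self_eq_zero.1 (hperp Z hZ)

theorem parabolic_has_no_flat_points_general
    {n : ℕ} (U : Set (Euc n))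
    (f : Euc n → Euc (n + 2)) (hf : IsParabolic f U) :
    ∀ x ∈ U, ∃ X Y : Euc n,
      ⟪sff f x X X, sff f x Y Y⟫ - ‖sff f x X Y‖ ^ 2 ≠ 0 := by
  obtain ⟨⟨-, hinj⟩, -, -, Z, -, hZne, hZperp, hZasym⟩ := hf
  intro x hx
  by_contra! hflat
  have hZnull : Z x ∈ relNullity f x := IsFlatPoint.mem_relNullity hflat (hZasym x hx)
  exact hZne x hx <|
    eq_zero_of_mem_relNullity_of_forall_inner_eq_zero (hinj x hx) hZnull (hZperp x hx)

/-- A parabolic submanifold has no flat points. -/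
theorem parabolic_has_no_flat_points
    {n : ℕ} (hn : 3 ≤ n) (U : Set (Euc n)) (hUo : IsOpen U)
    (f : Euc n → Euc (n + 2)) (hf : IsParabolic f U) :
    ∀ x ∈ U, ∃ X Y : Euc n,
      ⟪sff f x X X, sff f x Y Y⟫ - ‖sff f x X Y‖ ^ 2 ≠ 0 :=
  parabolic_has_no_flat_points_general U f hf

end
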